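/- (Semigroup property of the Mehler kernel.) For all s > 0, t > 0 and all x, y ∈ ℝ, ∫_ℝ G(t,x,z)·G(s,z,y) dz = G(t+s,x,y). -/

import Mathlib

noncomputable section
open MeasureTheory Real

/-- The Mehler kernel `G(t,x,y)`, the integral kernel of `e^{-tH}` for the
harmonic oscillator `H = ½(-d²/dx² + x²)`. -/
def G (t x y : ℝ) : ℝ :=
  (2 * Real.pi * Real.sinh t) ^ (-(1 : ℝ) / 2) *
    Real.exp (-(((x ^ 2 + y ^ 2) * Real.cosh t - 2 * x * y) / (2 * Real.sinh t)))

/-- The leading error kernel `R(t,x,y)`. -/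
def R (t x y : ℝ) : ℝ :=
  G t x y * (t ^ 2 / 12) *
    (t * ((1 / 4) * (Real.exp t + Real.exp (-t)) / (Real.exp t - Real.exp (-t)) +
          ((Real.exp t + Real.exp (-t)) * x * y - (x ^ 2 + y ^ 2)) /
            (Real.exp t - Real.exp (-t)) ^ 2) +
      (1 / 16) * (1 + (4 * x * y - (Real.exp t + Real.exp (-t)) * (x ^ 2 + y ^ 2)) /
            (Real.exp t - Real.exp (-t))))

/-!
In `z`, the product `G t x z * G s z y` is a Gaussian `exp (-a z² + c z + d)` with
`a = sinh (t + s) / (2 sinh t sinh s)`, by the addition formula for `sinh`. Completing the square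
integrates it to `√(π / a) · exp (d + c² / (4a))`. The prefactor then collapses to
`(2π sinh (t + s))^(-1/2)` as it stands, while the exponent becomes that of `G (t + s) x y` only
after the addition formulas for `sinh` and `cosh` and `cosh² - sinh² = 1`.
-/

theorem integral_exp_neg_mul_sq_add_mul_add {b : ℝ} (hb : 0 < b) (c d : ℝ) :
    ∫ x : ℝ, exp (-b * x ^ 2 + c * x + d) = √(π / b) * exp (d + c ^ 2 / (4 * b)) := by
  have complete_square : ∀ x : ℝ,
      exp (-b * x ^ 2 + c * x + d) =
        exp (d + c ^ 2 / (4 * b)) * exp (-b * (x - c / (2 * b)) ^ 2) := by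
    intro x
    rw [← exp_add]
    congr 1
    field_simp
    ring
  simp_rw [complete_square]
  rw [integral_const_mul, integral_sub_right_eq_self (fun x ↦ exp (-b * x ^ 2)), integral_gaussian,
    mul_comm]

theorem G_mul_G (t s x y z : ℝ) (ht : sinh t ≠ 0) (hs : sinh s ≠ 0) :
    G t x z * G s z y =
      (2 * π * sinh t) ^ (-(1 : ℝ) / 2) * (2 * π * sinh s) ^ (-(1 : ℝ) / 2) *
        exp (-(sinh (t + s) / (2 * sinh t * sinh s)) * z ^ 2 + (x / sinh t + y / sinh s) * z +
          -(x ^ 2 * cosh t / (2 * sinh t) + y ^ 2 * cosh s / (2 * sinh s))) := by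
  rw [G, G, mul_mul_mul_comm, ← exp_add, sinh_add]
  congr 2
  field_simp
  ring

theorem mehler_prefactor_mul {A B C : ℝ} (hA : 0 < A) (hB : 0 < B) (hC : 0 < C) :
    (2 * π * A) ^ (-(1 : ℝ) / 2) * (2 * π * B) ^ (-(1 : ℝ) / 2) * √(π / (C / (2 * A * B))) =
      (2 * π * C) ^ (-(1 : ℝ) / 2) := by
  have rpow_eq_inv_sqrt : ∀ a : ℝ, 0 < a → a ^ (-(1 : ℝ) / 2) = (√a)⁻¹ := fun a ha ↦ by
    rw [neg_div, rpow_neg ha.le, sqrt_eq_rpow]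
  have hsqrt : √(π / (C / (2 * A * B))) = √(2 * π * A) * √(2 * π * B) / √(2 * π * C) := by
    rw [← sqrt_mul (by positivity), ← sqrt_div (by positivity)]
    congr 1
    field_simp
  rw [rpow_eq_inv_sqrt _ (by positivity), rpow_eq_inv_sqrt _ (by positivity),
    rpow_eq_inv_sqrt _ (by positivity), hsqrt]
  have : 0 < √(2 * π * A) := sqrt_pos.mpr (by positivity)
  have : 0 < √(2 * π * B) := sqrt_pos.mpr (by positivity)
  field_simp

theorem mehler_exponent_add (t s x y : ℝ) (ht : sinh t ≠ 0) (hs : sinh s ≠ 0)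
    (hts : sinh (t + s) ≠ 0) :
    -(x ^ 2 * cosh t / (2 * sinh t) + y ^ 2 * cosh s / (2 * sinh s)) +
        (x / sinh t + y / sinh s) ^ 2 / (4 * (sinh (t + s) / (2 * sinh t * sinh s))) =
      -(((x ^ 2 + y ^ 2) * cosh (t + s) - 2 * x * y) / (2 * sinh (t + s))) := by
  rw [sinh_add] at hts ⊢
  rw [cosh_add]
  field_simp
  linear_combination (-4 * x ^ 2 * sinh s ^ 2) * cosh_sq t + (-4 * y ^ 2 * sinh t ^ 2) * cosh_sq s

/-- Semigroup (Chapman–Kolmogorov) property of the Mehler kernel. -/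
theorem mehler_kernel_semigroup (s t : ℝ) (hs : 0 < s) (ht : 0 < t) (x y : ℝ) :
    ∫ z : ℝ, G t x z * G s z y = G (t + s) x y := by
  have hSt : 0 < sinh t := sinh_pos_iff.mpr ht
  have hSs : 0 < sinh s := sinh_pos_iff.mpr hs
  have hSts : 0 < sinh (t + s) := sinh_pos_iff.mpr (add_pos ht hs)
  simp_rw [G_mul_G t s x y _ hSt.ne' hSs.ne']
  rw [integral_const_mul, integral_exp_neg_mul_sq_add_mul_add (by positivity), ← mul_assoc,
    mehler_prefactor_mul hSt hSs hSts, mehler_exponent_add t s x y hSt.ne' hSs.ne' hSts.ne', G]
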